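/- Let p(x,y) = a0*x^3 + 3*a1*x^2*y + 3*a2*x*y^2 + a3*y^3 with integer coefficients, and let p' be its cubic covariant with coefficients c0 = (2*a1^3 - 3*a0*a1*a2 + a0^2*a3)/2, c1 = (a1^2*a2 - 2*a0*a2^2 + a0*a1*a3)/2, c2 = -(a1*a2^2 - 2*a1^2*a3 + a0*a2*a3)/2, c3 = -(2*a2^3 - 3*a1*a2*a3 + a0*a3^2)/2. Then for every γ ∈ SL2(ℤ), (p·γ)' = p'·γ, i.e., the covariant map p ↦ p' is SL2(ℤ)-equivariant. -/

import Mathlib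

/-! Equivariance is a polynomial identity in the coefficients of `p` and the entries of `γ`:
for any 2×2 matrix `γ`, `(p·γ)' = det(γ)^3 · p'·γ`, and `det γ = 1` on `SL2(ℤ)`. The only other
input is that an integral cubic form `a0 x³ + 3a1 x²y + 3a2 xy² + a3 y³` is determined by its
values on `ℤ²`, which identifies the coefficients of `p·γ`. -/

/-- The cubic covariant p' of the binary cubic form with coefficients a0,3a1,3a2,a3,
evaluated at (x,y), as a rational number. -/
def cubicCovariant (a0 a1 a2 a3 : ℤ) (x y : ℚ) : ℚ :=
  ((2*a1^3 - 3*a0*a1*a2 + a0^2*a3 : ℤ) : ℚ)/2 * x^3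
    + 3*(((a1^2*a2 - 2*a0*a2^2 + a0*a1*a3 : ℤ) : ℚ)/2) * x^2*y
    + 3*(-((a1*a2^2 - 2*a1^2*a3 + a0*a2*a3 : ℤ) : ℚ)/2) * x*y^2
    + (-((2*a2^3 - 3*a1*a2*a3 + a0*a3^2 : ℤ) : ℚ)/2) * y^3

@[ext]
structure BinaryCubic (R : Type*) where
  a0 : R
  a1 : R
  a2 : R
  a3 : R

namespace BinaryCubic

variable {R : Type*} [CommRing R]

def eval (f : BinaryCubic R) (x y : R) : R :=
  f.a0 * x ^ 3 + 3 * f.a1 * x ^ 2 * y + 3 * f.a2 * x * y ^ 2 + f.a3 * y ^ 3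

def comp (f : BinaryCubic R) (p q r s : R) : BinaryCubic R where
  a0 := f.a0 * p ^ 3 + 3 * f.a1 * p ^ 2 * r + 3 * f.a2 * p * r ^ 2 + f.a3 * r ^ 3
  a1 := f.a0 * p ^ 2 * q + f.a1 * (p ^ 2 * s + 2 * p * q * r) + f.a2 * (2 * p * r * s + q * r ^ 2)
    + f.a3 * r ^ 2 * s
  a2 := f.a0 * p * q ^ 2 + f.a1 * (2 * p * q * s + q ^ 2 * r) + f.a2 * (p * s ^ 2 + 2 * q * r * s)
    + f.a3 * r * s ^ 2
  a3 := f.a0 * q ^ 3 + 3 * f.a1 * q ^ 2 * s + 3 * f.a2 * q * s ^ 2 + f.a3 * s ^ 3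

theorem eval_comp (f : BinaryCubic R) (p q r s x y : R) :
    (f.comp p q r s).eval x y = f.eval (p * x + q * y) (r * x + s * y) := by
  simp only [eval, comp]
  ring

/-- Values at `(1, 0), (0, 1), (1, 1), (1, -1)` determine a cubic form once `6` can be cancelled. -/
theorem ext_of_eval_eq [NoZeroDivisors R] [CharZero R] {f g : BinaryCubic R}
    (h : ∀ x y, f.eval x y = g.eval x y) : f = g := by
  have h10 := h 1 0
  have h01 := h 0 1
  have h11 := h 1 1
  have h1m := h 1 (-1)
  simp only [eval] at h10 h01 h11 h1m
  have h6 : (6 : R) ≠ 0 := by norm_num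
  ext
  · linear_combination h10
  · exact mul_left_cancel₀ h6 (by linear_combination h11 - h1m - 2 * h01)
  · exact mul_left_cancel₀ h6 (by linear_combination h11 + h1m - 2 * h10)
  · linear_combination h01

end BinaryCubic

theorem cubicCovariant_comp (f : BinaryCubic ℤ) (p q r s : ℤ) (x y : ℚ) :
    cubicCovariant (f.comp p q r s).a0 (f.comp p q r s).a1 (f.comp p q r s).a2
        (f.comp p q r s).a3 x y
      = ((p * s - q * r : ℤ) : ℚ) ^ 3
        * cubicCovariant f.a0 f.a1 f.a2 f.a3 (p * x + q * y) (r * x + s * y) := by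
  simp only [cubicCovariant, BinaryCubic.comp]
  push_cast
  ring

theorem covariant_equivariance
    (a0 a1 a2 a3 p q r s : ℤ) (hdet : p * s - q * r = 1)
    (b0 b1 b2 b3 : ℤ)
    (hact : ∀ x y : ℤ,
      a0*(p*x+q*y)^3 + 3*a1*(p*x+q*y)^2*(r*x+s*y) + 3*a2*(p*x+q*y)*(r*x+s*y)^2
        + a3*(r*x+s*y)^3
      = b0*x^3 + 3*b1*x^2*y + 3*b2*x*y^2 + b3*y^3) :
    ∀ x y : ℚ,
      cubicCovariant b0 b1 b2 b3 x y
        = cubicCovariant a0 a1 a2 a3 ((p : ℚ)*x + (q : ℚ)*y) ((r : ℚ)*x + (s : ℚ)*y) := by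
  intro x y
  have hb : BinaryCubic.mk b0 b1 b2 b3 = (BinaryCubic.mk a0 a1 a2 a3).comp p q r s :=
    BinaryCubic.ext_of_eval_eq fun u v => by
      rw [BinaryCubic.eval_comp]
      exact (hact u v).symm
  obtain ⟨rfl, rfl, rfl, rfl⟩ := BinaryCubic.mk.inj hb
  refine (cubicCovariant_comp ⟨a0, a1, a2, a3⟩ p q r s x y).trans ?_
  rw [hdet, Int.cast_one, one_pow, one_mul]
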